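/- arXiv:1910.08377 — 3 statements merged into one kernel-verified Lean document; each statement's English description precedes it below -/
import Mathlib

section
/- Every finite set of N distinct elements of an abelian group contains a quasi-independent subset of cardinality at least log N / log 3. -/
/-- Key step: if `Q` is a quasi-independent subset of `F` of maximal cardinality, then every
element of `F` is a difference of sums of two disjoint subsets of `Q`. -/
lemma exists_repr_of_maximal {G : Type*} [AddCommGroup G] (F Q : Finset G) (hQF : Q ⊆ F)
    (hind : ∀ A B : Finset G, A ⊆ Q → B ⊆ Q → A.sum id = B.sum id → A = B)
    (hmax : ∀ R ⊆ F, (∀ A B : Finset G, A ⊆ R → B ⊆ R → A.sum id = B.sum id → A = B) →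
      R.card ≤ Q.card) :
    ∀ x ∈ F, ∃ A B : Finset G, A ⊆ Q ∧ B ⊆ Q ∧ Disjoint A B ∧ x = A.sum id - B.sum id := by
  classical
  intro x hx
  by_cases hxQ : x ∈ Q
  · exact ⟨{x}, ∅, Finset.singleton_subset_iff.2 hxQ, Finset.empty_subset _,
      Finset.disjoint_empty_right _, by simp⟩
  · -- `insert x Q` is not quasi-independent by maximality
    have hni : ¬ (∀ A B : Finset G, A ⊆ insert x Q → B ⊆ insert x Q →
        A.sum id = B.sum id → A = B) := by
      intro h
      have := hmax (insert x Q) (Finset.insert_subset hx hQF) h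
      rw [Finset.card_insert_of_notMem hxQ] at this
      omega
    push_neg at hni
    obtain ⟨A', B', hA', hB', hsum, hne⟩ := hni
    set A'' := A' \ B' with hA''def
    set B'' := B' \ A' with hB''def
    have hdisj : Disjoint A'' B'' := disjoint_sdiff_sdiff
    have hsum'' : A''.sum id = B''.sum id := by
      have h1 : (A' ∩ B').sum id + A''.sum id = A'.sum id := Finset.sum_inter_add_sum_sdiff _ _ _
      have h2 : (B' ∩ A').sum id + B''.sum id = B'.sum id := Finset.sum_inter_add_sum_sdiff _ _ _
      rw [Finset.inter_comm] at h2
      have := h1.trans (hsum.trans h2.symm)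
      exact add_left_cancel this
    have hne'' : A'' ≠ B'' := by
      intro h
      have hA0 : A'' = ∅ := disjoint_self.1 (h ▸ hdisj)
      have hB0 : B'' = ∅ := h ▸ hA0
      apply hne
      rw [hA''def] at hA0
      rw [hB''def] at hB0
      exact Finset.Subset.antisymm (Finset.sdiff_eq_empty_iff_subset.1 hA0)
        (Finset.sdiff_eq_empty_iff_subset.1 hB0)
    have hA''sub : A'' ⊆ insert x Q := (Finset.sdiff_subset).trans hA'
    have hB''sub : B'' ⊆ insert x Q := (Finset.sdiff_subset).trans hB'
    have hxmem : x ∈ A'' ∨ x ∈ B'' := by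
      by_contra h
      push_neg at h
      have hA''Q : A'' ⊆ Q := fun y hy => by
        rcases Finset.mem_insert.1 (hA''sub hy) with rfl | h'
        · exact absurd hy h.1
        · exact h'
      have hB''Q : B'' ⊆ Q := fun y hy => by
        rcases Finset.mem_insert.1 (hB''sub hy) with rfl | h'
        · exact absurd hy h.2
        · exact h'
      exact hne'' (hind _ _ hA''Q hB''Q hsum'')
    -- helper to avoid duplicating the two symmetric cases
    rcases hxmem with hxA | hxB
    · have hxnB : x ∉ B'' := Finset.disjoint_left.1 hdisj hxA
      refine ⟨B'', A''.erase x, ?_, ?_, ?_, ?_⟩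
      · intro y hy
        rcases Finset.mem_insert.1 (hB''sub hy) with rfl | h'
        · exact absurd hy hxnB
        · exact h'
      · intro y hy
        have hy' := Finset.mem_erase.1 hy
        rcases Finset.mem_insert.1 (hA''sub hy'.2) with rfl | h'
        · exact absurd rfl hy'.1
        · exact h'
      · exact (hdisj.symm).mono_right (Finset.erase_subset _ _)
      · have h := Finset.add_sum_erase _ id hxA
        have : A''.sum id = x + (A''.erase x).sum id := h.symm
        rw [hsum''] at this
        simp only [id] at this ⊢
        rw [this]; abel
    · have hxnA : x ∉ A'' := Finset.disjoint_right.1 hdisj hxB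
      refine ⟨A'', B''.erase x, ?_, ?_, ?_, ?_⟩
      · intro y hy
        rcases Finset.mem_insert.1 (hA''sub hy) with rfl | h'
        · exact absurd hy hxnA
        · exact h'
      · intro y hy
        have hy' := Finset.mem_erase.1 hy
        rcases Finset.mem_insert.1 (hB''sub hy'.2) with rfl | h'
        · exact absurd rfl hy'.1
        · exact h'
      · exact hdisj.mono_right (Finset.erase_subset _ _)
      · have h := Finset.add_sum_erase _ id hxB
        have : B''.sum id = x + (B''.erase x).sum id := h.symm
        rw [← hsum''] at this
        simp only [id] at this ⊢
        rw [this]; abel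

/-- Every finite set of `N` distinct elements of an abelian group contains a
quasi-independent subset of cardinality at least `log N / log 3`.  A finite set `Q`
is quasi-independent if all its finite subset sums are distinct. -/
theorem exists_quasiIndependent_subset {G : Type*} [AddCommGroup G] (F : Finset G) :
    ∃ Q ⊆ F, (∀ A B : Finset G, A ⊆ Q → B ⊆ Q → A.sum id = B.sum id → A = B) ∧
      Real.log F.card / Real.log 3 ≤ Q.card := by
  classical
  -- the collection of quasi-independent subsets of F
  set S : Finset (Finset G) := F.powerset.filter
    (fun R => ∀ A B : Finset G, A ⊆ R → B ⊆ R → A.sum id = B.sum id → A = B) with hS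
  have hSne : S.Nonempty := by
    refine ⟨∅, ?_⟩
    simp only [hS, Finset.mem_filter, Finset.mem_powerset]
    exact ⟨Finset.empty_subset _, fun A B hA hB _ => by
      rw [Finset.subset_empty.1 hA, Finset.subset_empty.1 hB]⟩
  obtain ⟨Q, hQS, hQmax⟩ := S.exists_max_image Finset.card hSne
  simp only [hS, Finset.mem_filter, Finset.mem_powerset] at hQS
  obtain ⟨hQF, hind⟩ := hQS
  have hmax : ∀ R ⊆ F, (∀ A B : Finset G, A ⊆ R → B ⊆ R → A.sum id = B.sum id → A = B) →
      R.card ≤ Q.card := by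
    intro R hRF hRind
    exact hQmax R (Finset.mem_filter.2 ⟨Finset.mem_powerset.2 hRF, hRind⟩)
  refine ⟨Q, hQF, hind, ?_⟩
  -- counting: |F| ≤ 3 ^ |Q|
  have hrep := exists_repr_of_maximal F Q hQF hind hmax
  have hcard : F.card ≤ 3 ^ Q.card := by
    choose A B hA hB hd hsum using hrep
    set φ : {x // x ∈ F} → ({q // q ∈ Q} → Fin 3) := fun x q =>
      if (q : G) ∈ A x x.2 then 0 else if (q : G) ∈ B x x.2 then 1 else 2 with hφ
    have hinj : Function.Injective φ := by
      intro x y hxy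
      have hAB : A x x.2 = A y y.2 ∧ B x x.2 = B y y.2 := by
        constructor <;> ext g <;> constructor <;> intro hg
        · have hgQ : g ∈ Q := hA x x.2 hg
          have := congrFun hxy ⟨g, hgQ⟩
          simp only [hφ, hg, if_pos] at this
          by_contra hgy
          rw [if_neg hgy] at this
          split_ifs at this <;> exact absurd this (by decide)
        · have hgQ : g ∈ Q := hA y y.2 hg
          have := congrFun hxy ⟨g, hgQ⟩
          simp only [hφ, hg, if_pos] at this
          by_contra hgx
          rw [if_neg hgx] at this
          split_ifs at this <;> exact absurd this (by decide)
        · have hgQ : g ∈ Q := hB x x.2 hg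
          have hgnA : g ∉ A x x.2 := Finset.disjoint_right.1 (hd x x.2) hg
          have := congrFun hxy ⟨g, hgQ⟩
          simp only [hφ, hg, hgnA, if_neg, if_pos, not_false_iff] at this
          by_contra hgy
          by_cases hgyA : g ∈ A y y.2
          · rw [if_pos hgyA] at this; exact absurd this.symm (by decide)
          · rw [if_neg hgyA, if_neg hgy] at this; exact absurd this.symm (by decide)
        · have hgQ : g ∈ Q := hB y y.2 hg
          have hgnA : g ∉ A y y.2 := Finset.disjoint_right.1 (hd y y.2) hg
          have := congrFun hxy ⟨g, hgQ⟩
          simp only [hφ, hg, hgnA, if_neg, if_pos, not_false_iff] at this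
          by_contra hgx
          by_cases hgxA : g ∈ A x x.2
          · rw [if_pos hgxA] at this; exact absurd this (by decide)
          · rw [if_neg hgxA, if_neg hgx] at this; exact absurd this (by decide)
      have : (x : G) = (y : G) := by
        rw [hsum x x.2, hsum y y.2, hAB.1, hAB.2]
      exact Subtype.ext this
    have := Fintype.card_le_of_injective φ hinj
    simpa [Fintype.card_coe] using this
  -- take logs
  have h3 : (0:ℝ) < Real.log 3 := Real.log_pos (by norm_num)
  rw [div_le_iff₀ h3]
  have hlog : Real.log F.card ≤ Real.log (3 ^ Q.card : ℕ) := by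
    rcases Nat.eq_zero_or_pos F.card with h0 | hpos
    · rw [h0]
      simp only [Nat.cast_zero, Real.log_zero]
      exact Real.log_nonneg (by exact_mod_cast Nat.one_le_iff_ne_zero.2 (pow_ne_zero _ (by norm_num)))
    · exact Real.log_le_log (by exact_mod_cast hpos) (by exact_mod_cast hcard)
  calc Real.log F.card ≤ Real.log (3 ^ Q.card : ℕ) := hlog
    _ = Q.card * Real.log 3 := by
        rw [Nat.cast_pow, Real.log_pow]
        norm_num
end

section
/- Let p be an odd prime and let a be a generator of the cyclic group Z_p. Fix an even integer s ≥ 2 and suppose g_1, ..., g_N ∈ {a, a^2, ..., a^{2^n}} satisfy: whenever ε_1, ..., ε_N ∈ {0, ±1, ±2} with ∑|ε_j| ≤ 2s and ∏ g_j^{ε_j} = 1, then all ε_j = 0. If 2·C(N, 2s)·5^{2s}·(2s)! products can be avoided, i.e., if the number of elements of the form ∏_{j=1}^N g_j^{ε_j} with ε_j ∈ {0,±1,±2}, ∑|ε_j| ≤ 2s, counted together with their 'square roots', is strictly less than 2^n, then there exists g_{N+1} ∈ {a, a^2, ..., a^{2^n}} such that g_1, ..., g_{N+1} satisfies the same property.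 -/
/-- Greedy-extension step: in `Z_p` (`p` an odd prime, `p > 2^{n+1}`), if
`g_1, ..., g_N ∈ {a, 2a, ..., 2^n a}` satisfy the dissociation-type property (any
relation `∑ ε_j g_j = 0` with `ε_j ∈ {0,±1,±2}`, `∑|ε_j| ≤ 2s` forces all `ε_j = 0`),
and twice the number of elements of the form `∑ ε_j g_j` (accounting for the forbidden
values for `g_{N+1}` and its "square root", squaring being a bijection in odd order)
is strictly less than `2^n`, then some `g_{N+1} ∈ {a, ..., 2^n a}` extends the family
with the same property. -/
theorem greedy_extension (p n s N : ℕ) (hp : p.Prime) (hodd : Odd p)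
    (hpn : 2 ^ (n + 1) < p) (hs : Even s) (hs2 : 2 ≤ s)
    (a : ZMod p) (ha : addOrderOf a = p)
    (g : Fin N → ZMod p)
    (hg : ∀ j, ∃ k : ℕ, 1 ≤ k ∧ k ≤ 2 ^ n ∧ g j = k • a)
    (hP : ∀ ε : Fin N → ℤ, (∀ j, |ε j| ≤ 2) → (∑ j, |ε j|) ≤ 2 * s →
      (∑ j, ε j • g j) = 0 → ∀ j, ε j = 0)
    (hcount : 2 * Set.ncard {x : ZMod p | ∃ ε : Fin N → ℤ, (∀ j, |ε j| ≤ 2) ∧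
        (∑ j, |ε j|) ≤ 2 * s ∧ x = ∑ j, ε j • g j} < 2 ^ n) :
    ∃ g' : ZMod p, (∃ k : ℕ, 1 ≤ k ∧ k ≤ 2 ^ n ∧ g' = k • a) ∧
      ∀ ε : Fin (N + 1) → ℤ, (∀ j, |ε j| ≤ 2) → (∑ j, |ε j|) ≤ 2 * s →
        (∑ j, ε j • (Fin.snoc g g' : Fin (N + 1) → ZMod p) j) = 0 → ∀ j, ε j = 0 := by
  haveI : Fact p.Prime := ⟨hp⟩
  haveI : NeZero p := ⟨hp.ne_zero⟩
  set S : Set (ZMod p) := {x : ZMod p | ∃ ε : Fin N → ℤ, (∀ j, |ε j| ≤ 2) ∧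
      (∑ j, |ε j|) ≤ 2 * s ∧ x = ∑ j, ε j • g j} with hS
  have h2pow : (2 : ℕ) ≤ 2 ^ (n + 1) := Nat.le_self_pow (by omega) 2
  have hp2 : (2 : ℕ) < p := lt_of_le_of_lt h2pow hpn
  have h2ne : (2 : ZMod p) ≠ 0 := by
    have h2 := (ZMod.natCast_eq_zero_iff 2 p).not.mpr
      (Nat.not_dvd_of_pos_of_lt (by norm_num) hp2)
    exact_mod_cast h2
  -- the set of bad choices
  set T : Set (ZMod p) := {x : ZMod p | (2 : ZMod p) * x ∈ S} with hT
  have hTcard : T.ncard ≤ S.ncard := by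
    have hTeq : T = (fun y => (2 : ZMod p)⁻¹ * y) '' S := by
      ext x
      constructor
      · intro hx
        exact ⟨2 * x, hx, by field_simp⟩
      · rintro ⟨y, hy, rfl⟩
        show (2 : ZMod p) * ((2 : ZMod p)⁻¹ * y) ∈ S
        rw [← mul_assoc, mul_inv_cancel₀ h2ne, one_mul]; exact hy
    rw [hTeq]
    exact le_of_eq (Set.ncard_image_of_injective _
      (mul_right_injective₀ (inv_ne_zero h2ne)))
  have hBcard : (S ∪ T).ncard < 2 ^ n := by
    calc (S ∪ T).ncard ≤ S.ncard + T.ncard := Set.ncard_union_le S T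
      _ ≤ 2 * S.ncard := by omega
      _ < 2 ^ n := hcount
  -- the candidate set
  set K : Set (ZMod p) := (fun k : ℕ => k • a) '' ↑(Finset.Icc 1 (2 ^ n)) with hK
  have h2np : 2 ^ n < p :=
    lt_of_le_of_lt (Nat.pow_le_pow_right (by norm_num) (by omega)) hpn
  have hinj : Set.InjOn (fun k : ℕ => k • a) ↑(Finset.Icc 1 (2 ^ n)) := by
    intro k hk l hl hkl
    simp only [Finset.coe_Icc, Set.mem_Icc] at hk hl
    have hmod := (nsmul_eq_nsmul_iff_modEq (x := a) (m := l) (n := k)).mp hkl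
    rw [ha] at hmod
    exact hmod.eq_of_lt_of_lt (lt_of_le_of_lt hk.2 h2np) (lt_of_le_of_lt hl.2 h2np)
  have hKcard : K.ncard = 2 ^ n := by
    rw [hK, Set.ncard_image_of_injOn hinj, Set.ncard_coe_finset, Nat.card_Icc]
    omega
  obtain ⟨g', hg'K, hg'B⟩ : ∃ x ∈ K, x ∉ S ∪ T := by
    apply Set.exists_mem_notMem_of_ncard_lt_ncard
    · rw [hKcard]; exact hBcard
    · exact Set.toFinite _
  have hg'S : g' ∉ S := fun h => hg'B (Or.inl h)
  have hg'T : g' ∉ T := fun h => hg'B (Or.inr h)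
  obtain ⟨k, hkmem, hka⟩ := hg'K
  simp only [Finset.coe_Icc, Set.mem_Icc] at hkmem
  refine ⟨g', ⟨k, hkmem.1, hkmem.2, hka.symm⟩, ?_⟩
  intro ε h1 h2 h0
  set m : ℤ := ε (Fin.last N) with hmdef
  set e : Fin N → ℤ := fun j => ε j.castSucc with hedef
  -- split off the last coordinate
  have hsum : (∑ j : Fin N, e j • g j) + m • g' = 0 := by
    rw [← h0, Fin.sum_univ_castSucc]
    simp [hedef, hmdef, Fin.snoc_castSucc, Fin.snoc_last]
  have habs : (∑ j : Fin N, |e j|) + |m| ≤ 2 * s := by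
    have h2' := h2
    rw [Fin.sum_univ_castSucc (f := fun j => |ε j|)] at h2'
    simpa [hedef, hmdef] using h2'
  have habs' : (∑ j : Fin N, |e j|) ≤ 2 * s := by
    have := abs_nonneg m; omega
  have key : ∀ δ : Fin N → ℤ, (∀ j, |δ j| ≤ 2) → (∑ j, |δ j|) ≤ 2 * s →
      (∑ j, δ j • g j) ∈ S := fun δ hδ1 hδ2 => ⟨δ, hδ1, hδ2, rfl⟩
  have hneg : ∀ j, |(-e j)| ≤ 2 := fun j => by rw [abs_neg]; exact h1 _
  have hnegsum : (∑ j : Fin N, |(-e j)|) ≤ 2 * s := by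
    simpa [abs_neg] using habs'
  have hml : -2 ≤ m := (abs_le.mp (h1 (Fin.last N))).1
  have hmr : m ≤ 2 := (abs_le.mp (h1 (Fin.last N))).2
  have h2smul : ((2 : ℤ)) • g' = (2 : ZMod p) * g' := by
    rw [zsmul_eq_mul]; norm_num
  have hlast : m = 0 := by
    have hcase : m = -2 ∨ m = -1 ∨ m = 0 ∨ m = 1 ∨ m = 2 := by omega
    rcases hcase with h | h | h | h | h
    · -- m = -2 : 2 * g' = ∑ e_j g_j ∈ S
      exfalso; apply hg'T
      show (2 : ZMod p) * g' ∈ S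
      have heq : (2 : ZMod p) * g' = ∑ j : Fin N, e j • g j := by
        have hs' := hsum
        rw [h, show ((-2 : ℤ)) • g' = -((2:ℤ) • g') from neg_smul 2 g', h2smul] at hs'
        linear_combination -hs'
      exact heq ▸ key e (fun j => h1 j.castSucc) habs'
    · -- m = -1 : g' = ∑ e_j g_j ∈ S
      exfalso; apply hg'S
      have heq : g' = ∑ j : Fin N, e j • g j := by
        have hs' := hsum
        rw [h, neg_one_smul] at hs'
        linear_combination -hs'
      exact heq ▸ key e (fun j => h1 j.castSucc) habs'
    · exact h
    · -- m = 1 : g' = ∑ (-e_j) g_j ∈ S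
      exfalso; apply hg'S
      have heq : g' = ∑ j : Fin N, (-e j) • g j := by
        have hs' := hsum
        rw [h, one_smul] at hs'
        simp only [neg_smul, Finset.sum_neg_distrib]
        linear_combination hs'
      exact heq ▸ key _ hneg hnegsum
    · -- m = 2 : 2 * g' = ∑ (-e_j) g_j ∈ S
      exfalso; apply hg'T
      show (2 : ZMod p) * g' ∈ S
      have heq : (2 : ZMod p) * g' = ∑ j : Fin N, (-e j) • g j := by
        have hs' := hsum
        rw [h, h2smul] at hs'
        simp only [neg_smul, Finset.sum_neg_distrib]
        linear_combination hs'
      exact heq ▸ key _ hneg hnegsum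
  -- now the first N coefficients
  have hzero : ∀ j : Fin N, e j = 0 := by
    apply hP e (fun j => h1 _) habs'
    have hs' := hsum
    rw [hlast, zero_smul, add_zero] at hs'
    exact hs'
  intro j
  refine Fin.lastCases hlast (fun i => hzero i) j
end

section
/- Let G be a free product of abelian groups and for each even s ≥ 2 let Λ = ⋃_{n} E_n where the E_n lie in distinct free factors and each E_n satisfies: whenever ε_j ∈ {0,±1,±2} with ∑|ε_j| ≤ 2s and ∏_{g∈E_n} g^{ε_g} = 1, then all ε_g = 0. Then whenever x_1, ..., x_s ∈ Λ are distinct, y_1, ..., y_s ∈ Λ are distinct, and x_1 x_2^{-1} x_3 ··· x_s^{-1} = y_1 y_2^{-1} ··· y_s^{-1}, it follows that {x_1, x_3, ..., x_{s-1}} = {y_1, y_3, ..., y_{s-1}} and {x_2, x_4, ..., x_s} = {y_2, y_4, ..., y_s}. Consequently Z_s(Λ) ≤ ((s/2)!)^2 ≤ s!. -/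
/-!
Project the identity onto each free factor `A i` through the retraction `CoprodI A →* A i`:
letters from the other factors become `1`, and in the abelian group `A i` the signed
multiplicities of the letters on the two sides differ by a relation among elements of `E i`
with coefficients in `{0, ±1, ±2}` and total weight at most `2s`. Such a relation is trivial,
so every letter `x j` occurs among the `y k` with the same sign, i.e. at a position of the same
parity. Consequently all solutions of `x₁ x₂⁻¹ ⋯ xₛ⁻¹ = w` are parity-preserving rearrangements
`x₀ ∘ σ` of a single one, and there are `((s/2)!)²` such permutations `σ`.
-/

open Monoid Finset

def HasNoShortRelations {B : Type*} [CommGroup B] (E : Set B) (s : ℕ) : Prop :=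
  ∀ ε : B →₀ ℤ, (ε.support : Set B) ⊆ E → (∀ g, |ε g| ≤ 2) → (∑ g ∈ ε.support, |ε g|) ≤ 2 * s →
    (∏ g ∈ ε.support, g ^ ε g) = 1 → ε = 0

theorem HasNoShortRelations.one_notMem {B : Type*} [CommGroup B] {E : Set B} {s : ℕ}
    (hE : HasNoShortRelations E s) (hs : s ≠ 0) : (1 : B) ∉ E := by
  classical
  intro h1
  refine one_ne_zero (Finsupp.single_eq_zero.mp (hE (Finsupp.single 1 1) ?_ ?_ ?_ ?_))
  · simpa using h1
  · intro g
    rw [Finsupp.single_apply]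
    split_ifs <;> norm_num
  · have hs' : (1 : ℤ) ≤ 2 * s := by omega
    simpa using hs'
  · simp

def altProd {M : Type*} [Group M] {n : ℕ} (x : Fin n → M) : M :=
  (List.ofFn fun j : Fin n => x j ^ ((-1 : ℤ) ^ (j : ℕ))).prod

theorem map_altProd {M N : Type*} [Group M] [Group N] {n : ℕ} (f : M →* N) (x : Fin n → M) :
    f (altProd x) = altProd fun j => f (x j) := by
  simp [altProd, map_list_prod, List.map_ofFn, Function.comp_def]

section AltCount

variable {B : Type*} {n : ℕ}

noncomputable def altCount (u : Fin n → B) : B →₀ ℤ :=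
  ∑ j, Finsupp.single (u j) ((-1) ^ (j : ℕ))

theorem altCount_apply [DecidableEq B] (u : Fin n → B) (g : B) :
    altCount u g = ∑ j with u j = g, (-1 : ℤ) ^ (j : ℕ) := by
  simp [altCount, Finsupp.finsetSum_apply, Finsupp.single_apply, Finset.sum_filter]

theorem abs_altCount_apply_le [DecidableEq B] (u : Fin n → B) (g : B) :
    |altCount u g| ≤ #{j | u j = g} := by
  rw [altCount_apply]
  refine (abs_sum_le_sum_abs _ _).trans ?_
  simp [abs_pow]

theorem sum_abs_altCount_le (u : Fin n → B) (T : Finset B) : ∑ g ∈ T, |altCount u g| ≤ n := by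
  -- not `classical`: the filters must go through `DecidableEq B`, as in
  -- `sum_card_fiberwise_eq_card_filter`
  let _ := Classical.decEq B
  calc ∑ g ∈ T, |altCount u g| ≤ ∑ g ∈ T, (#{j | u j = g} : ℤ) :=
        sum_le_sum fun g _ => abs_altCount_apply_le u g
    _ = #{j | u j ∈ T} := by rw [← Nat.cast_sum, sum_card_fiberwise_eq_card_filter]
    _ ≤ n := by exact_mod_cast (card_filter_le _ _).trans (card_fin n).le

theorem abs_altCount_apply_le_one [One B] {u : Fin n → B} (hu : Set.InjOn u {j | u j ≠ 1})
    {g : B} (hg : g ≠ 1) : |altCount u g| ≤ 1 := by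
  classical
  refine (abs_altCount_apply_le u g).trans (Nat.cast_le_one.mpr (card_le_one.mpr ?_))
  intro a ha b hb
  simp only [mem_filter, mem_univ, true_and] at ha hb
  exact hu (by simpa [ha] using hg) (by simpa [hb] using hg) (ha.trans hb.symm)

theorem altCount_apply_self [One B] {u : Fin n → B} (hu : Set.InjOn u {j | u j ≠ 1})
    {j : Fin n} (hj : u j ≠ 1) : altCount u (u j) = (-1) ^ (j : ℕ) := by
  classical
  rw [altCount_apply, sum_eq_single_of_mem j (by simp)]
  intro k hk hkj
  simp only [mem_filter, mem_univ, true_and] at hk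
  exact absurd (hu (by simpa [hk] using hj) hj hk) hkj

theorem exists_apply_eq_of_altCount_ne_zero {u : Fin n → B} {g : B} (h : altCount u g ≠ 0) :
    ∃ j, u j = g := by
  classical
  rw [altCount_apply] at h
  obtain ⟨j, hj, -⟩ := exists_ne_zero_of_sum_ne_zero h
  exact ⟨j, (mem_filter.mp hj).2⟩

theorem prod_erase_one_altCount [CommGroup B] (u : Fin n → B) :
    ((altCount u).erase 1).prod (fun g k => g ^ k) = altProd u := by
  have h := Finsupp.mul_prod_erase' (altCount u) 1 (fun g k => g ^ k) fun _ => zpow_zero _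
  rw [one_zpow, one_mul] at h
  rw [h, altCount,
    ← Finsupp.prod_finsetSum_index (fun _ => zpow_zero _) (fun _ _ _ => zpow_add _ _ _)]
  simp [Finsupp.prod_single_index, altProd, List.prod_ofFn]

theorem altCount_erase_one_eq_of_altProd_eq [CommGroup B] {E : Set B}
    (hE : HasNoShortRelations E n) {u v : Fin n → B}
    (hu : ∀ j, u j ∈ insert 1 E) (hv : ∀ j, v j ∈ insert 1 E)
    (hu' : Set.InjOn u {j | u j ≠ 1}) (hv' : Set.InjOn v {j | v j ≠ 1})
    (h : altProd u = altProd v) : (altCount u).erase 1 = (altCount v).erase 1 := by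
  set ε := (altCount u).erase 1 - (altCount v).erase 1 with hε
  have hε_one : ε 1 = 0 := by simp [ε]
  have hε_ne {g : B} (hg : g ≠ 1) : ε g = altCount u g - altCount v g := by
    simp [ε, Finsupp.erase_ne hg]
  have hsupp : (ε.support : Set B) ⊆ E := by
    intro g hg
    have hg1 : g ≠ 1 := by rintro rfl; simp [hε_one] at hg
    have hne : altCount u g ≠ 0 ∨ altCount v g ≠ 0 := by
      by_contra! h0
      simp [hε_ne hg1, h0.1, h0.2] at hg
    rcases hne with hne | hne
    · obtain ⟨j, rfl⟩ := exists_apply_eq_of_altCount_ne_zero hne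
      exact (hu j).resolve_left hg1
    · obtain ⟨j, rfl⟩ := exists_apply_eq_of_altCount_ne_zero hne
      exact (hv j).resolve_left hg1
  have hle (g : B) : |ε g| ≤ |altCount u g| + |altCount v g| := by
    rcases eq_or_ne g 1 with rfl | hg
    · rw [hε_one, abs_zero]
      positivity
    · exact hε_ne hg ▸ abs_sub _ _
  have hbound (g : B) : |ε g| ≤ 2 := by
    rcases eq_or_ne g 1 with rfl | hg
    · simp [hε_one]
    · linarith [hle g, abs_altCount_apply_le_one hu' hg, abs_altCount_apply_le_one hv' hg]
  have hsum : ∑ g ∈ ε.support, |ε g| ≤ 2 * n := by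
    calc ∑ g ∈ ε.support, |ε g|
        ≤ ∑ g ∈ ε.support, |altCount u g| + ∑ g ∈ ε.support, |altCount v g| := by
          rw [← sum_add_distrib]; exact sum_le_sum fun g _ => hle g
      _ ≤ 2 * n := by linarith [sum_abs_altCount_le u ε.support, sum_abs_altCount_le v ε.support]
  have hprod : ∏ g ∈ ε.support, g ^ ε g = 1 := by
    have hsplit := Finsupp.prod_add_index' (f := ε) (g := (altCount v).erase 1)
      (h := fun g k => g ^ k) (fun _ => zpow_zero _) (fun _ _ _ => zpow_add _ _ _)
    rw [hε, sub_add_cancel, prod_erase_one_altCount, prod_erase_one_altCount, h] at hsplit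
    exact mul_eq_right.mp hsplit.symm
  exact sub_eq_zero.mp (hE ε hsupp hbound hsum hprod)

theorem exists_eq_and_even_iff_of_altProd_eq [CommGroup B] {E : Set B}
    (hE : HasNoShortRelations E n) {u v : Fin n → B}
    (hu : ∀ j, u j ∈ insert 1 E) (hv : ∀ j, v j ∈ insert 1 E)
    (hu' : Set.InjOn u {j | u j ≠ 1}) (hv' : Set.InjOn v {j | v j ≠ 1})
    (h : altProd u = altProd v) {j : Fin n} (hj : u j ≠ 1) :
    ∃ k, v k = u j ∧ (Even (j : ℕ) ↔ Even (k : ℕ)) := by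
  have hcount := congr($(altCount_erase_one_eq_of_altProd_eq hE hu hv hu' hv' h) (u j))
  rw [Finsupp.erase_ne hj, Finsupp.erase_ne hj, altCount_apply_self hu' hj] at hcount
  obtain ⟨k, hk⟩ := exists_apply_eq_of_altCount_ne_zero (hcount ▸ pow_ne_zero _ (by norm_num))
  rw [← hk, altCount_apply_self hv' (hk ▸ hj)] at hcount
  refine ⟨k, hk, ?_⟩
  have hneg : (-1 : ℤ) ≠ 1 := by norm_num
  rw [← neg_one_pow_eq_one_iff_even hneg, hcount, neg_one_pow_eq_one_iff_even hneg]

end AltCount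

namespace Monoid.CoprodI

variable {ι : Type*} [DecidableEq ι] {A : ι → Type*} [∀ i, Monoid (A i)]

def proj (i : ι) : CoprodI A →* A i :=
  lift (Pi.mulSingle i (MonoidHom.id (A i)))

@[simp]
theorem proj_of_self {i : ι} (g : A i) : proj i (of g) = g := by
  simp [proj]

theorem proj_of_of_ne {i j : ι} (h : j ≠ i) (g : A j) : proj i (of g) = 1 := by
  simp [proj, Pi.mulSingle_eq_of_ne h]

variable {E : ∀ i, Set (A i)} {x : CoprodI A}

theorem proj_mem_insert_one (hx : x ∈ ⋃ n, (fun g => of g) '' E n) (i : ι) :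
    proj i x ∈ insert 1 (E i) := by
  obtain ⟨j, g, hg, rfl⟩ : ∃ j, ∃ g ∈ E j, of g = x := by simpa using hx
  rcases eq_or_ne j i with rfl | hji
  · simp [hg]
  · simp [proj_of_of_ne hji]

theorem of_proj_eq_self (hx : x ∈ ⋃ n, (fun g => of g) '' E n) {i : ι} (h : proj i x ≠ 1) :
    of (proj i x) = x := by
  obtain ⟨j, g, -, rfl⟩ : ∃ j, ∃ g ∈ E j, of g = x := by simpa using hx
  rcases eq_or_ne j i with rfl | hji
  · simp
  · exact absurd (proj_of_of_ne hji g) h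

theorem injOn_proj_comp {n : ℕ} {z : Fin n → CoprodI A}
    (hz : ∀ k, z k ∈ ⋃ n, (fun g => of g) '' E n) (hinj : Function.Injective z) (i : ι) :
    Set.InjOn (fun k => proj i (z k)) {k | proj i (z k) ≠ 1} := by
  intro a ha b hb hab
  apply hinj
  rw [← of_proj_eq_self (hz a) ha, ← of_proj_eq_self (hz b) hb]
  exact congrArg of hab

end Monoid.CoprodI

open Monoid.CoprodI in
theorem exists_eq_and_even_iff_of_altProd_eq_of_mem {ι : Type*} {A : ι → Type*}
    [∀ i, CommGroup (A i)] {E : ∀ i, Set (A i)} {s : ℕ}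
    (hE : ∀ i, HasNoShortRelations (E i) s) {x y : Fin s → CoprodI A}
    (hx : ∀ j, x j ∈ ⋃ n, (fun g => of g) '' E n) (hy : ∀ j, y j ∈ ⋃ n, (fun g => of g) '' E n)
    (hx' : Function.Injective x) (hy' : Function.Injective y) (h : altProd x = altProd y)
    (j : Fin s) : ∃ k, y k = x j ∧ (Even (j : ℕ) ↔ Even (k : ℕ)) := by
  classical
  obtain ⟨i, g, hg, hgx⟩ : ∃ i, ∃ g ∈ E i, of g = x j := by simpa using hx j
  have hg1 : g ≠ 1 := fun h1 => (hE i).one_notMem j.pos.ne' (h1 ▸ hg)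
  have hxj : proj i (x j) = g := by rw [← hgx, proj_of_self]
  have hproj : altProd (fun k => proj i (x k)) = altProd (fun k => proj i (y k)) := by
    simpa only [map_altProd] using congrArg (proj i) h
  obtain ⟨k, hk, hjk⟩ := exists_eq_and_even_iff_of_altProd_eq (hE i)
    (fun k => proj_mem_insert_one (hx k) i) (fun k => proj_mem_insert_one (hy k) i)
    (injOn_proj_comp hx hx' i) (injOn_proj_comp hy hy' i) hproj (hxj ▸ hg1)
  refine ⟨k, ?_, hjk⟩
  rw [← of_proj_eq_self (hy k) (hk ▸ hxj ▸ hg1), hk, hxj, hgx]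

theorem setOf_even_subset_and_setOf_odd_subset {n : ℕ} {β : Type*} {x y : Fin n → β}
    (h : ∀ j, ∃ k, y k = x j ∧ (Even (j : ℕ) ↔ Even (k : ℕ))) :
    {g | ∃ i : Fin n, Even (i : ℕ) ∧ x i = g} ⊆ {g | ∃ i : Fin n, Even (i : ℕ) ∧ y i = g} ∧
      {g | ∃ i : Fin n, Odd (i : ℕ) ∧ x i = g} ⊆ {g | ∃ i : Fin n, Odd (i : ℕ) ∧ y i = g} := by
  constructor <;> rintro _ ⟨i, hi, rfl⟩ <;> obtain ⟨k, hk, hik⟩ := h i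
  · exact ⟨k, hik.mp hi, hk⟩
  · rw [← Nat.not_even_iff_odd] at hi
    exact ⟨k, Nat.not_even_iff_odd.mp (mt hik.mpr hi), hk⟩

theorem ncard_le_prod_factorial {α β κ : Type*} [Finite α] [Fintype κ] (c : α → κ) (x₀ : α → β)
    {T : Set (α → β)} (hT : ∀ x ∈ T, Function.Injective x ∧ ∀ a, ∃ b, c b = c a ∧ x₀ b = x a) :
    T.ncard ≤ ∏ k, {a | c a = k}.ncard.factorial := by
  have hsub : T ⊆ (fun σ : Equiv.Perm α => x₀ ∘ σ) '' {σ | c ∘ σ = c} := by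
    intro x hx
    obtain ⟨hinj, hmatch⟩ := hT x hx
    choose τ hτc hτx using hmatch
    have hτ : Function.Injective τ := fun a b hab => hinj (by rw [← hτx, hab, hτx])
    exact ⟨Equiv.ofBijective τ hτ.bijective_of_finite, funext hτc, funext hτx⟩
  calc T.ncard ≤ ((fun σ : Equiv.Perm α => x₀ ∘ σ) '' {σ | c ∘ σ = c}).ncard :=
        Set.ncard_le_ncard hsub (Set.toFinite _)
    _ ≤ {σ : Equiv.Perm α | c ∘ σ = c}.ncard := Set.ncard_image_le (Set.toFinite _)
    _ = _ := DomMulAct.stabilizer_ncard c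

theorem ncard_setOf_ofNat_two_eq (t : ℕ) (r : Fin 2) :
    {j : Fin (t + t) | Fin.ofNat 2 j = r}.ncard = t := by
  have e : {j : Fin (t + t) | Fin.ofNat 2 j = r} ≃ Fin t :=
    { toFun := fun j => ⟨j.1 / 2, by omega⟩
      invFun := fun k => ⟨⟨2 * k + r, by omega⟩, by
        simp only [Set.mem_ofPred_eq, Fin.ext_iff, Fin.val_ofNat]
        omega⟩
      left_inv := fun ⟨j, hj⟩ => by
        simp only [Set.mem_ofPred_eq, Fin.ext_iff, Fin.val_ofNat] at hj
        ext
        dsimp only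
        omega
      right_inv := fun k => by
        ext
        dsimp only
        omega }
  rw [← Nat.card_coe_set_eq, Nat.card_congr e, Nat.card_fin]

open Monoid.CoprodI in
theorem ncard_setOf_altProd_eq_le {ι : Type*} {A : ι → Type*} [∀ i, CommGroup (A i)]
    {E : ∀ i, Set (A i)} {t : ℕ} (hE : ∀ i, HasNoShortRelations (E i) (t + t)) (w : CoprodI A) :
    {x : Fin (t + t) → CoprodI A | (∀ i, x i ∈ ⋃ n, (fun g => of g) '' E n) ∧
      Function.Injective x ∧ altProd x = w}.ncard ≤ t.factorial ^ 2 := by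
  set T := {x : Fin (t + t) → CoprodI A | (∀ i, x i ∈ ⋃ n, (fun g => of g) '' E n) ∧
    Function.Injective x ∧ altProd x = w}
  rcases T.eq_empty_or_nonempty with hT | ⟨x₀, hx₀, hx₀', hx₀w⟩
  · rw [hT, Set.ncard_empty]
    exact Nat.zero_le _
  have hperm : ∀ x ∈ T, Function.Injective x ∧
      ∀ a : Fin (t + t), ∃ b : Fin (t + t), Fin.ofNat 2 b = Fin.ofNat 2 a ∧ x₀ b = x a := by
    rintro x ⟨hx, hx', hxw⟩
    refine ⟨hx', fun a => ?_⟩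
    obtain ⟨b, hb, hab⟩ :=
      exists_eq_and_even_iff_of_altProd_eq_of_mem hE hx hx₀ hx' hx₀' (hxw.trans hx₀w.symm) a
    exact ⟨b, by ext; simp only [Fin.val_ofNat]; grind, hb⟩
  calc T.ncard ≤ ∏ r, {j : Fin (t + t) | Fin.ofNat 2 j = r}.ncard.factorial :=
        ncard_le_prod_factorial _ x₀ hperm
    _ = t.factorial ^ 2 := by
        rw [Fin.prod_univ_two, ncard_setOf_ofNat_two_eq, ncard_setOf_ofNat_two_eq, sq]

theorem free_product_Zs_bound_general {ι : Type*} (A : ι → Type*) [∀ i, CommGroup (A i)]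
    (s : ℕ) (hs : Even s)
    (E : ∀ i, Set (A i))
    (hdiss : ∀ i, ∀ ε : A i →₀ ℤ, (ε.support : Set (A i)) ⊆ E i →
      (∀ g, |ε g| ≤ 2) → (∑ g ∈ ε.support, |ε g|) ≤ 2 * s →
      (∏ g ∈ ε.support, g ^ ε g) = 1 → ε = 0) :
    (∀ x y : Fin s → CoprodI A,
      (∀ i, x i ∈ ⋃ n, (fun g => CoprodI.of g) '' E n) →
      (∀ i, y i ∈ ⋃ n, (fun g => CoprodI.of g) '' E n) →
      Function.Injective x → Function.Injective y →
      (List.ofFn fun i : Fin s => (x i) ^ ((-1 : ℤ) ^ (i : ℕ))).prod =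
        (List.ofFn fun i : Fin s => (y i) ^ ((-1 : ℤ) ^ (i : ℕ))).prod →
      ({g | ∃ i : Fin s, Even (i : ℕ) ∧ x i = g} = {g | ∃ i : Fin s, Even (i : ℕ) ∧ y i = g} ∧
       {g | ∃ i : Fin s, Odd (i : ℕ) ∧ x i = g} = {g | ∃ i : Fin s, Odd (i : ℕ) ∧ y i = g})) ∧
    (∀ w : CoprodI A,
      Set.ncard {x : Fin s → CoprodI A |
        (∀ i, x i ∈ ⋃ n, (fun g => CoprodI.of g) '' E n) ∧ Function.Injective x ∧
        (List.ofFn fun i : Fin s => (x i) ^ ((-1 : ℤ) ^ (i : ℕ))).prod = w} ≤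
        Nat.factorial (s / 2) ^ 2) ∧
    Nat.factorial (s / 2) ^ 2 ≤ Nat.factorial s := by
  have hE : ∀ i, HasNoShortRelations (E i) s := hdiss
  obtain ⟨t, rfl⟩ := hs
  have ht : (t + t) / 2 = t := by omega
  refine ⟨fun x y hx hy hx' hy' h => ?_, fun w => ?_, ?_⟩
  · obtain ⟨hxy_even, hxy_odd⟩ := setOf_even_subset_and_setOf_odd_subset
      (exists_eq_and_even_iff_of_altProd_eq_of_mem hE hx hy hx' hy' h)
    obtain ⟨hyx_even, hyx_odd⟩ := setOf_even_subset_and_setOf_odd_subset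
      (exists_eq_and_even_iff_of_altProd_eq_of_mem hE hy hx hy' hx' h.symm)
    exact ⟨hxy_even.antisymm hyx_even, hxy_odd.antisymm hyx_odd⟩
  · rw [ht]
    exact ncard_setOf_altProd_eq_le hE w
  · rw [ht, sq]
    exact Nat.le_of_dvd (Nat.factorial_pos _) (Nat.factorial_mul_factorial_dvd_factorial_add t t)

/-- In a free product `G = ∗_i A_i` of abelian groups, if each `E_i ⊆ A_i` has the
dissociation-type property (any relation `∏_{g ∈ E_i} g^{ε_g} = 1` with
`ε_g ∈ {0,±1,±2}`, `∑|ε_g| ≤ 2s` forces `ε = 0`), then an identity of alternating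
products of distinct elements of `Λ = ⋃_i E_i` forces the odd-indexed and even-indexed
sets to coincide; consequently `Z_s(Λ) ≤ ((s/2)!)² ≤ s!`. -/
theorem free_product_Zs_bound {ι : Type*} (A : ι → Type*) [∀ i, CommGroup (A i)]
    (s : ℕ) (hs : Even s) (hs2 : 2 ≤ s)
    (E : ∀ i, Set (A i))
    (hdiss : ∀ i, ∀ ε : A i →₀ ℤ, (ε.support : Set (A i)) ⊆ E i →
      (∀ g, |ε g| ≤ 2) → (∑ g ∈ ε.support, |ε g|) ≤ 2 * s →
      (∏ g ∈ ε.support, g ^ ε g) = 1 → ε = 0) :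
    (∀ x y : Fin s → CoprodI A,
      (∀ i, x i ∈ ⋃ n, (fun g => CoprodI.of g) '' E n) →
      (∀ i, y i ∈ ⋃ n, (fun g => CoprodI.of g) '' E n) →
      Function.Injective x → Function.Injective y →
      (List.ofFn fun i : Fin s => (x i) ^ ((-1 : ℤ) ^ (i : ℕ))).prod =
        (List.ofFn fun i : Fin s => (y i) ^ ((-1 : ℤ) ^ (i : ℕ))).prod →
      ({g | ∃ i : Fin s, Even (i : ℕ) ∧ x i = g} = {g | ∃ i : Fin s, Even (i : ℕ) ∧ y i = g} ∧
       {g | ∃ i : Fin s, Odd (i : ℕ) ∧ x i = g} = {g | ∃ i : Fin s, Odd (i : ℕ) ∧ y i = g})) ∧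
    (∀ w : CoprodI A,
      Set.ncard {x : Fin s → CoprodI A |
        (∀ i, x i ∈ ⋃ n, (fun g => CoprodI.of g) '' E n) ∧ Function.Injective x ∧
        (List.ofFn fun i : Fin s => (x i) ^ ((-1 : ℤ) ^ (i : ℕ))).prod = w} ≤
        Nat.factorial (s / 2) ^ 2) ∧
    Nat.factorial (s / 2) ^ 2 ≤ Nat.factorial s :=
  free_product_Zs_bound_general A s hs E hdiss
end
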